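/- Let k be a field of characteristic zero, n ≥ 1, and let R be a Noetherian local k-algebra with residue field k which is complete with respect to its maximal-ideal-adic topology. Set A_n := k[t]/(t^{n+1}), A_{n+1} := k[t]/(t^{n+2}), B_n := k[t,ε]/(t^{n+1}, ε²) and C_n := k[t,ε]/(t^{n+1}, ε², εt^n). If the map Hom_{k-alg}(R, B_n) → Hom_{k-alg}(R, C_n) given by composing with the canonical surjection B_n → C_n is surjective, then the map Hom_{k-alg}(R, A_{n+1}) → Hom_{k-alg}(R, A_n) given by composing with the reduction A_{n+1} → A_n is surjective. -/

import Mathlib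

/-!
Substituting `t ↦ t + ε` gives `p(t + ε) = p(t) + p'(t) ε` modulo `ε²`, and this defines maps
`δ : A_{n+1} → B_n` and `δ : A_n → C_n` compatible with the reductions. Both are injective (for
`A_{n+1}` because `p' ≡ 0 mod tⁿ⁺¹` and `p(0) = 0` force `tⁿ⁺² ∣ p` in characteristic zero), and
an element of `B_n` whose image in `C_n` comes from `A_n` comes from `A_{n+1}`: the only
obstruction is the coefficient of `ε tⁿ`, which adding `c tⁿ⁺¹` changes by `(n + 1) c`. So the
square is a pullback, and a lift `R → B_n` of `δ ∘ f` for `f : R → A_n` yields a lift of `f`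
to `A_{n+1}`.
-/

open Polynomial

universe u

/-- `k[t,ε]`, realized as `(k[t])[ε]` with `t` the inner and `ε` the outer variable. -/
noncomputable abbrev kTE (k : Type u) [Field k] : Type u := Polynomial (Polynomial k)

/-- The variable `t` in `k[t,ε]`. -/
noncomputable abbrev tP (k : Type u) [Field k] : kTE k := Polynomial.C Polynomial.X

/-- The variable `ε` in `k[t,ε]`. -/
noncomputable abbrev eP (k : Type u) [Field k] : kTE k := Polynomial.X

theorem AlgHom.surjective_comp_of_pullback {k R A' A B C : Type*} [CommSemiring k] [Semiring R]
    [Semiring A'] [Semiring A] [Semiring B] [Semiring C] [Algebra k R] [Algebra k A']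
    [Algebra k A] [Algebra k B] [Algebra k C] {red : A' →ₐ[k] A} {s : B →ₐ[k] C}
    {δ' : A' →ₐ[k] B} {δ : A →ₐ[k] C} (hcomm : ∀ x, s (δ' x) = δ (red x))
    (hδ' : Function.Injective δ') (hδ : Function.Injective δ)
    (hlift : ∀ b a, s b = δ a → b ∈ δ'.range)
    (hsurj : Function.Surjective fun φ : R →ₐ[k] B => s.comp φ) :
    Function.Surjective fun g : R →ₐ[k] A' => red.comp g := by
  intro f
  obtain ⟨φ, hφ⟩ := hsurj (δ.comp f)
  have hφ_mem r : φ r ∈ δ'.range := hlift _ (f r) (AlgHom.congr_fun hφ r)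
  let e := AlgEquiv.ofInjective δ' hδ'
  refine ⟨e.symm.toAlgHom.comp (φ.codRestrict _ hφ_mem), AlgHom.ext fun r => hδ ?_⟩
  have he : δ' (e.symm ⟨φ r, hφ_mem r⟩) = φ r :=
    congrArg Subtype.val (e.apply_symm_apply ⟨φ r, hφ_mem r⟩)
  change δ (red (e.symm ⟨φ r, hφ_mem r⟩)) = δ (f r)
  rw [← hcomm, he]
  exact AlgHom.congr_fun hφ r

namespace Polynomial

section CommRing

variable {S : Type*} [CommRing S]

theorem mem_span_C_X_sq_X_mul_C_iff {p q : S} (hqp : q ∣ p) (z : S[X]) :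
    z ∈ Ideal.span {C p, X ^ 2, X * C q} ↔ p ∣ z.coeff 0 ∧ q ∣ z.coeff 1 := by
  constructor
  · intro hz
    induction hz using Submodule.span_induction with
    | mem x hx => rcases hx with rfl | rfl | rfl <;> simp [coeff_X, coeff_C]
    | zero => simp
    | add x y _ _ hx hy => exact ⟨by simpa using hx.1.add hy.1, by simpa using hx.2.add hy.2⟩
    | smul a x _ hx =>
      rw [smul_eq_mul, mul_coeff_zero, mul_coeff_one]
      exact ⟨hx.1.mul_left _, (hx.2.mul_left _).add ((hqp.trans hx.1).mul_left _)⟩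
  · rintro ⟨⟨u, hu⟩, ⟨v, hv⟩⟩
    have hz : z = divX (divX z) * X ^ 2 + C v * (X * C q) + C u * C p := by
      conv_lhs => rw [← divX_mul_X_add z, ← divX_mul_X_add (divX z)]
      rw [coeff_divX, zero_add, hu, hv, C_mul, C_mul]
      ring
    rw [hz]
    refine add_mem (add_mem ?_ ?_) ?_ <;> exact Ideal.mul_mem_left _ _ (Ideal.subset_span (by simp))

theorem mem_span_C_X_sq_iff (p : S) (z : S[X]) :
    z ∈ Ideal.span {C p, X ^ 2} ↔ p ∣ z.coeff 0 ∧ p ∣ z.coeff 1 := by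
  have h : X * C p ∈ Ideal.span {C p, X ^ 2} :=
    Ideal.mul_mem_left _ _ (Ideal.subset_span (by simp))
  have hspan : Ideal.span {C p, X ^ 2, X * C p} = Ideal.span {C p, X ^ 2} := by
    rw [Set.pair_comm (X ^ 2), Set.insert_comm]
    exact Submodule.span_insert_eq_span h
  rw [← hspan, mem_span_C_X_sq_X_mul_C_iff dvd_rfl]

end CommRing

theorem X_pow_succ_dvd_iff {R : Type*} [CommRing R] [IsDomain R] [CharZero R] {p : R[X]}
    {m : ℕ} : X ^ (m + 1) ∣ p ↔ p.coeff 0 = 0 ∧ X ^ m ∣ derivative p := by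
  simp only [X_pow_dvd_iff, coeff_derivative]
  constructor
  · intro h
    exact ⟨h 0 m.succ_pos, fun d hd => by rw [h (d + 1) (by omega), zero_mul]⟩
  · rintro ⟨h0, h⟩ (_ | d) hd
    · exact h0
    · exact (mul_eq_zero.mp (h d (by omega))).resolve_right (by exact_mod_cast d.succ_ne_zero)

theorem exists_X_pow_succ_dvd_and_dvd_sub_derivative {k : Type*} [Field k] [CharZero k] {n : ℕ}
    {v : k[X]} (hv : X ^ n ∣ v) :
    ∃ x : k[X], X ^ (n + 1) ∣ x ∧ X ^ (n + 1) ∣ v - derivative x := by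
  refine ⟨C (v.coeff n / (n + 1)) * X ^ (n + 1), dvd_mul_left _ _, ?_⟩
  rw [X_pow_dvd_iff] at hv ⊢
  intro d hd
  rw [derivative_C_mul_X_pow, coeff_sub, coeff_C_mul_X_pow, Nat.add_sub_cancel]
  rcases (Nat.lt_succ_iff.mp hd).lt_or_eq with hdn | rfl
  · rw [hv d hdn, if_neg hdn.ne, sub_zero]
  · rw [if_pos rfl]
    field_simp
    push_cast
    ring

end Polynomial

section

variable (k : Type u) [Field k]

/-- `A_m = k[t] ⧸ idealA k m`, `B_n = k[t,ε] ⧸ idealB k n`, `C_n = k[t,ε] ⧸ idealC k n`. -/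
noncomputable abbrev idealA (m : ℕ) : Ideal k[X] := Ideal.span {X ^ (m + 1)}

noncomputable abbrev idealB (n : ℕ) : Ideal (kTE k) := Ideal.span {tP k ^ (n + 1), eP k ^ 2}

noncomputable abbrev idealC (n : ℕ) : Ideal (kTE k) :=
  Ideal.span {tP k ^ (n + 1), eP k ^ 2, eP k * tP k ^ n}

variable {k}

theorem tP_pow (m : ℕ) : tP k ^ m = C (X ^ m) := C_pow.symm

theorem aeval_tP_add_eP (p : k[X]) : aeval (tP k + eP k) p = taylor X (p.map C) := by
  rw [taylor_apply, comp_eq_aeval, ← algebraMap_eq (R := k), aeval_map_algebraMap, add_comm]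

theorem coeff_zero_aeval_tP_add_eP (p : k[X]) : (aeval (tP k + eP k) p).coeff 0 = p := by
  rw [aeval_tP_add_eP, taylor_coeff_zero, eval_map, eval₂_C_X]

theorem coeff_one_aeval_tP_add_eP (p : k[X]) :
    (aeval (tP k + eP k) p).coeff 1 = derivative p := by
  rw [aeval_tP_add_eP, taylor_coeff_one, derivative_map, eval_map, eval₂_C_X]

variable (k) (n : ℕ)

theorem mem_idealB_iff (z : kTE k) :
    z ∈ idealB k n ↔ X ^ (n + 1) ∣ z.coeff 0 ∧ X ^ (n + 1) ∣ z.coeff 1 := by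
  rw [idealB, tP_pow]
  exact mem_span_C_X_sq_iff _ z

theorem mem_idealC_iff (z : kTE k) :
    z ∈ idealC k n ↔ X ^ (n + 1) ∣ z.coeff 0 ∧ X ^ n ∣ z.coeff 1 := by
  rw [idealC, tP_pow, tP_pow]
  exact mem_span_C_X_sq_X_mul_C_iff (pow_dvd_pow X n.le_succ) z

theorem comap_aeval_tP_add_eP_idealB [CharZero k] :
    (idealB k n).comap (aeval (tP k + eP k) : k[X] →ₐ[k] kTE k) = idealA k (n + 1) := by
  ext p
  rw [Ideal.mem_comap, mem_idealB_iff, coeff_zero_aeval_tP_add_eP, coeff_one_aeval_tP_add_eP,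
    Ideal.mem_span_singleton, X_pow_succ_dvd_iff (m := n), X_pow_succ_dvd_iff (m := n + 1)]
  exact ⟨fun ⟨⟨h0, _⟩, h1⟩ => ⟨h0, h1⟩,
    fun ⟨h0, h1⟩ => ⟨⟨h0, (pow_dvd_pow X n.le_succ).trans h1⟩, h1⟩⟩

theorem comap_aeval_tP_add_eP_idealC :
    (idealC k n).comap (aeval (tP k + eP k) : k[X] →ₐ[k] kTE k) = idealA k n := by
  ext p
  rw [Ideal.mem_comap, mem_idealC_iff, coeff_zero_aeval_tP_add_eP, coeff_one_aeval_tP_add_eP,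
    Ideal.mem_span_singleton]
  exact and_iff_left_of_imp pow_sub_one_dvd_derivative_of_pow_dvd

theorem idealA_succ_le : idealA k (n + 1) ≤ idealA k n :=
  Ideal.span_singleton_le_span_singleton.mpr (pow_dvd_pow X (n + 1).le_succ)

theorem idealB_le_idealC : idealB k n ≤ idealC k n :=
  Ideal.span_mono (Set.insert_subset_insert (Set.singleton_subset_iff.mpr (Set.mem_insert _ _)))

noncomputable def deltaB [CharZero k] : (k[X] ⧸ idealA k (n + 1)) →ₐ[k] kTE k ⧸ idealB k n :=
  Ideal.quotientMapₐ _ (aeval (tP k + eP k)) (comap_aeval_tP_add_eP_idealB k n).ge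

noncomputable def deltaC : (k[X] ⧸ idealA k n) →ₐ[k] kTE k ⧸ idealC k n :=
  Ideal.quotientMapₐ _ (aeval (tP k + eP k)) (comap_aeval_tP_add_eP_idealC k n).ge

theorem deltaB_injective [CharZero k] : Function.Injective (deltaB k n) :=
  Ideal.quotientMap_injective' (H := (comap_aeval_tP_add_eP_idealB k n).ge)
    (comap_aeval_tP_add_eP_idealB k n).le

theorem deltaC_injective : Function.Injective (deltaC k n) :=
  Ideal.quotientMap_injective' (H := (comap_aeval_tP_add_eP_idealC k n).ge)
    (comap_aeval_tP_add_eP_idealC k n).le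

theorem factorₐ_deltaB [CharZero k] (x : k[X] ⧸ idealA k (n + 1)) :
    Ideal.Quotient.factorₐ k (idealB_le_idealC k n) (deltaB k n x) =
      deltaC k n (Ideal.Quotient.factorₐ k (idealA_succ_le k n) x) := by
  obtain ⟨p, rfl⟩ := Ideal.Quotient.mk_surjective x
  rfl

theorem mem_range_deltaB_of_factorₐ_eq [CharZero k] (b : kTE k ⧸ idealB k n)
    (a : k[X] ⧸ idealA k n) (h : Ideal.Quotient.factorₐ k (idealB_le_idealC k n) b = deltaC k n a) :
    b ∈ (deltaB k n).range := by
  obtain ⟨b, rfl⟩ := Ideal.Quotient.mk_surjective b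
  obtain ⟨a, rfl⟩ := Ideal.Quotient.mk_surjective a
  have hba : b - aeval (tP k + eP k) a ∈ idealC k n := Ideal.Quotient.eq.mp h
  obtain ⟨h0, h1⟩ := (mem_idealC_iff k n _).mp hba
  rw [coeff_sub, coeff_zero_aeval_tP_add_eP] at h0
  rw [coeff_sub, coeff_one_aeval_tP_add_eP] at h1
  obtain ⟨x, hx0, hx1⟩ := exists_X_pow_succ_dvd_and_dvd_sub_derivative h1
  refine ⟨Ideal.Quotient.mk _ (a + x), Ideal.Quotient.eq.mpr ?_⟩
  rw [AlgHom.coe_toRingHom, mem_idealB_iff, coeff_sub, coeff_sub, coeff_zero_aeval_tP_add_eP,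
    coeff_one_aeval_tP_add_eP, derivative_add]
  constructor
  · convert hx0.sub h0 using 1; ring
  · convert dvd_neg.mpr hx1 using 1; ring

end

theorem surjective_on_An_of_surjective_on_Cn_general
    (k : Type u) [Field k] [CharZero k] (n : ℕ)
    (R : Type u) [CommRing R] [Algebra k R]
    -- the canonical surjection `B_n → C_n`
    (s : (kTE k ⧸ Ideal.span {tP k ^ (n + 1), eP k ^ 2}) →ₐ[k]
        kTE k ⧸ Ideal.span {tP k ^ (n + 1), eP k ^ 2, eP k * tP k ^ n})
    (hs : ∀ x : kTE k, s (Ideal.Quotient.mk _ x) = Ideal.Quotient.mk _ x)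
    -- the reduction `A_{n+1} → A_n`
    (red : (Polynomial k ⧸ Ideal.span {(X : Polynomial k) ^ (n + 2)}) →ₐ[k]
        Polynomial k ⧸ Ideal.span {(X : Polynomial k) ^ (n + 1)})
    (hred : ∀ y : Polynomial k, red (Ideal.Quotient.mk _ y) = Ideal.Quotient.mk _ y)
    -- surjectivity of `Hom_{k-alg}(R, B_n) → Hom_{k-alg}(R, C_n)`
    (hsurj : Function.Surjective
      (fun φ : R →ₐ[k] kTE k ⧸ Ideal.span {tP k ^ (n + 1), eP k ^ 2} => s.comp φ)) :
    Function.Surjective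
      (fun g : R →ₐ[k] Polynomial k ⧸ Ideal.span {(X : Polynomial k) ^ (n + 2)} =>
        red.comp g) := by
  obtain rfl : s = Ideal.Quotient.factorₐ k (idealB_le_idealC k n) :=
    Ideal.Quotient.algHom_ext k (AlgHom.ext hs)
  obtain rfl : red = Ideal.Quotient.factorₐ k (idealA_succ_le k n) :=
    Ideal.Quotient.algHom_ext k (AlgHom.ext hred)
  exact AlgHom.surjective_comp_of_pullback (factorₐ_deltaB k n) (deltaB_injective k n)
    (deltaC_injective k n) (mem_range_deltaB_of_factorₐ_eq k n) hsurj

/-- First step of the T¹-lifting principle, for the deformation functor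
`D = Hom_{k-alg}(R, ·)` of a complete Noetherian local `k`-algebra `R` with residue field `k`
(`char k = 0`): if `D(B_n) → D(C_n)` is surjective, then `D(A_{n+1}) → D(A_n)` is
surjective, where `A_m = k[t]/(t^{m+1})`, `B_n = k[t,ε]/(t^{n+1},ε²)` and
`C_n = k[t,ε]/(t^{n+1},ε²,εtⁿ)`. -/
theorem surjective_on_An_of_surjective_on_Cn
    (k : Type u) [Field k] [CharZero k] (n : ℕ) (hn : 1 ≤ n)
    (R : Type u) [CommRing R] [Algebra k R]
    [IsNoetherianRing R] [IsLocalRing R]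
    (hres : Function.Bijective ((IsLocalRing.residue R).comp (algebraMap k R)))
    [IsAdicComplete (IsLocalRing.maximalIdeal R) R]
    -- the canonical surjection `B_n → C_n`
    (s : (kTE k ⧸ Ideal.span {tP k ^ (n + 1), eP k ^ 2}) →ₐ[k]
        kTE k ⧸ Ideal.span {tP k ^ (n + 1), eP k ^ 2, eP k * tP k ^ n})
    (hs : ∀ x : kTE k, s (Ideal.Quotient.mk _ x) = Ideal.Quotient.mk _ x)
    -- the reduction `A_{n+1} → A_n`
    (red : (Polynomial k ⧸ Ideal.span {(X : Polynomial k) ^ (n + 2)}) →ₐ[k]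
        Polynomial k ⧸ Ideal.span {(X : Polynomial k) ^ (n + 1)})
    (hred : ∀ y : Polynomial k, red (Ideal.Quotient.mk _ y) = Ideal.Quotient.mk _ y)
    -- surjectivity of `Hom_{k-alg}(R, B_n) → Hom_{k-alg}(R, C_n)`
    (hsurj : Function.Surjective
      (fun φ : R →ₐ[k] kTE k ⧸ Ideal.span {tP k ^ (n + 1), eP k ^ 2} => s.comp φ)) :
    Function.Surjective
      (fun g : R →ₐ[k] Polynomial k ⧸ Ideal.span {(X : Polynomial k) ^ (n + 2)} =>
        red.comp g) :=
  surjective_on_An_of_surjective_on_Cn_general k n R s hs red hred hsurj
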